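/- arXiv:1905.07728 — 2 statements merged into one kernel-verified Lean document; each statement's English description precedes it below -/
import Mathlib

section
/- For real h ≠ 0, l > 0 and a ∈ ℝ, the symmetric limit lim_{K→∞} ∑_{|k|≤K} (1/(2π)) ln|x − a − kl + ih| − (1/(2π)) ln|x − a′ − kl + ih′| (difference of two such shifted logarithmic sums with parameters (a,h) and (a′,h′)) equals (1/(2π)) ln|sin(π(x−a+ih)/l)| − (1/(2π)) ln|sin(π(x−a′+ih′)/l)| for any complex x not equal to any of the points a + kl − ih or a′ + kl − ih′. -/
/-!
After the substitution `z = (x - a + i h) / l` the `k`-th term becomes `log ‖z - k‖` up to the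
constant `log l`, which cancels in the difference. A symmetric partial sum of `log ‖z - k‖` is the
logarithm of the norm of `∏_{|k| ≤ K} (z - k)`, and this product is a nonzero multiple, the same
for `z` and `w`, of the `K`-th partial product of Euler's product for `sin (π z)`. Hence the ratio
of the partial products for `z` and `w` tends to `sin (π z) / sin (π w)`.
-/

open Complex Filter Finset Topology
open scoped Real

lemma log_norm_mul_sub_log_norm_mul {𝕜 : Type*} [NormedDivisionRing 𝕜] {c u v : 𝕜}
    (hc : c ≠ 0) (hu : u ≠ 0) (hv : v ≠ 0) :
    Real.log ‖c * u‖ - Real.log ‖c * v‖ = Real.log ‖u‖ - Real.log ‖v‖ := by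
  rw [norm_mul, norm_mul, Real.log_mul (norm_ne_zero_iff.mpr hc) (norm_ne_zero_iff.mpr hu),
    Real.log_mul (norm_ne_zero_iff.mpr hc) (norm_ne_zero_iff.mpr hv)]
  ring

lemma sum_log_norm_sub_log_norm {ι 𝕜 : Type*} [NormedField 𝕜] {s : Finset ι} {f g : ι → 𝕜}
    (hf : ∀ i ∈ s, f i ≠ 0) (hg : ∀ i ∈ s, g i ≠ 0) :
    ∑ i ∈ s, (Real.log ‖f i‖ - Real.log ‖g i‖) = Real.log ‖(∏ i ∈ s, f i) / ∏ i ∈ s, g i‖ := by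
  have hf' : ∀ i ∈ s, ‖f i‖ ≠ 0 := fun i hi => norm_ne_zero_iff.mpr (hf i hi)
  have hg' : ∀ i ∈ s, ‖g i‖ ≠ 0 := fun i hi => norm_ne_zero_iff.mpr (hg i hi)
  rw [sum_sub_distrib, ← Real.log_prod hf', ← Real.log_prod hg', norm_div, norm_prod, norm_prod,
    Real.log_div (prod_ne_zero_iff.mpr hf') (prod_ne_zero_iff.mpr hg')]

namespace Complex

lemma sub_intCast_ne_zero_of_mem_integerComplement {z : ℂ} (hz : z ∈ integerComplement) (k : ℤ) :
    z - k ≠ 0 := by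
  simpa [sub_eq_add_neg] using integerComplement_add_ne_zero hz (-k)

lemma euler_sin_partial_prod_eq_prod_Icc (z : ℂ) (K : ℕ) :
    π * z * ∏ j ∈ range K, (1 - z ^ 2 / ((j : ℂ) + 1) ^ 2) =
      π * (-1) ^ K / (K.factorial : ℂ) ^ 2 * ∏ k ∈ Icc (-(K : ℤ)) K, (z - k) := by
  induction K with
  | zero => simp
  | succ K ih =>
    rw [prod_range_succ, ← mul_assoc, ih, Nat.cast_add_one, Icc_succ_succ,
      prod_union (by simp), prod_pair (by omega), Nat.factorial_succ]
    push_cast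
    field_simp
    ring

theorem tendsto_prod_Icc_sub_intCast_div (z : ℂ) {w : ℂ} (hw : Complex.sin (π * w) ≠ 0) :
    Tendsto (fun K : ℕ => (∏ k ∈ Icc (-(K : ℤ)) K, (z - k)) / ∏ k ∈ Icc (-(K : ℤ)) K, (w - k))
      atTop (𝓝 (Complex.sin (π * z) / Complex.sin (π * w))) := by
  refine ((tendsto_euler_sin_prod z).div (tendsto_euler_sin_prod w) hw).congr fun K => ?_
  have hc : (π : ℂ) * (-1) ^ K / (K.factorial : ℂ) ^ 2 ≠ 0 := by
    simp [Real.pi_ne_zero, K.factorial_ne_zero]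
  simp only [Pi.div_apply, euler_sin_partial_prod_eq_prod_Icc, mul_div_mul_left _ _ hc]

theorem tendsto_sum_log_norm_sub_intCast {z w : ℂ} (hz : z ∈ integerComplement)
    (hw : w ∈ integerComplement) :
    Tendsto (fun K : ℕ => ∑ k ∈ Icc (-(K : ℤ)) K, (Real.log ‖z - k‖ - Real.log ‖w - k‖))
      atTop (𝓝 (Real.log ‖Complex.sin (π * z)‖ - Real.log ‖Complex.sin (π * w)‖)) := by
  have hsin_z := sin_pi_mul_ne_zero hz
  have hsin_w := sin_pi_mul_ne_zero hw
  have hlim : (Real.log ‖Complex.sin (π * z)‖ - Real.log ‖Complex.sin (π * w)‖) =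
      Real.log ‖Complex.sin (π * z) / Complex.sin (π * w)‖ := by
    rw [norm_div, Real.log_div (norm_ne_zero_iff.mpr hsin_z) (norm_ne_zero_iff.mpr hsin_w)]
  simp only [hlim, sum_log_norm_sub_log_norm
    (fun k _ => sub_intCast_ne_zero_of_mem_integerComplement hz k)
    (fun k _ => sub_intCast_ne_zero_of_mem_integerComplement hw k)]
  have hne : ‖Complex.sin (π * z) / Complex.sin (π * w)‖ ≠ 0 := by simp [hsin_z, hsin_w]
  exact (Real.continuousAt_log hne).tendsto.comp
    (continuous_norm.continuousAt.tendsto.comp (tendsto_prod_Icc_sub_intCast_div z hsin_w))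

end Complex

theorem symmetric_log_sum_tendsto_log_sin_general
    (l : ℝ) (hl : 0 < l) (a h a' h' : ℝ) (x : ℂ)
    (hx : ∀ k : ℤ, x ≠ (a : ℂ) + k * l - Complex.I * h)
    (hx' : ∀ k : ℤ, x ≠ (a' : ℂ) + k * l - Complex.I * h') :
    Tendsto (fun K : ℕ => ∑ k ∈ Finset.Icc (-(K : ℤ)) (K : ℤ),
        ((1 / (2 * Real.pi)) * Real.log (‖x - a - k * l + Complex.I * h‖) -
         (1 / (2 * Real.pi)) * Real.log (‖x - a' - k * l + Complex.I * h'‖)))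
      atTop
      (nhds ((1 / (2 * Real.pi)) *
          Real.log (‖Complex.sin ((Real.pi : ℂ) * (x - a + Complex.I * h) / l)‖) -
        (1 / (2 * Real.pi)) *
          Real.log (‖Complex.sin ((Real.pi : ℂ) * (x - a' + Complex.I * h') / l)‖))) := by
  have hl0 : (l : ℂ) ≠ 0 := ofReal_ne_zero.mpr hl.ne'
  set z : ℂ := (x - a + I * h) / l
  set w : ℂ := (x - a' + I * h') / l
  have hz_term (k : ℤ) : x - a - k * l + I * h = l * (z - k) := by simp only [z]; field_simp; ring
  have hw_term (k : ℤ) : x - a' - k * l + I * h' = l * (w - k) := by simp only [w]; field_simp; ring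
  have hz : z ∈ integerComplement := fun ⟨k, hk⟩ =>
    hx k (by linear_combination hz_term k - l * hk)
  have hw : w ∈ integerComplement := fun ⟨k, hk⟩ =>
    hx' k (by linear_combination hw_term k - l * hk)
  have hsum (K : ℕ) : ∑ k ∈ Icc (-(K : ℤ)) K,
      (1 / (2 * π) * Real.log ‖x - a - k * l + I * h‖ -
        1 / (2 * π) * Real.log ‖x - a' - k * l + I * h'‖) =
      1 / (2 * π) * ∑ k ∈ Icc (-(K : ℤ)) K, (Real.log ‖z - k‖ - Real.log ‖w - k‖) := by
    rw [mul_sum]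
    refine sum_congr rfl fun k _ => ?_
    rw [← mul_sub, hz_term, hw_term, log_norm_mul_sub_log_norm_mul hl0
      (sub_intCast_ne_zero_of_mem_integerComplement hz k)
      (sub_intCast_ne_zero_of_mem_integerComplement hw k)]
  rw [mul_div_assoc, mul_div_assoc, ← mul_sub]
  simpa only [hsum] using (tendsto_sum_log_norm_sub_intCast hz hw).const_mul (1 / (2 * π))

/-- The symmetric limit of the difference of two shifted logarithmic sums equals the
difference of the corresponding logarithms of sines. -/
theorem symmetric_log_sum_tendsto_log_sin
    (l : ℝ) (hl : 0 < l) (a h a' h' : ℝ) (hh : h ≠ 0) (x : ℂ)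
    (hx : ∀ k : ℤ, x ≠ (a : ℂ) + k * l - Complex.I * h)
    (hx' : ∀ k : ℤ, x ≠ (a' : ℂ) + k * l - Complex.I * h') :
    Tendsto (fun K : ℕ => ∑ k ∈ Finset.Icc (-(K : ℤ)) (K : ℤ),
        ((1 / (2 * Real.pi)) * Real.log (‖x - a - k * l + Complex.I * h‖) -
         (1 / (2 * Real.pi)) * Real.log (‖x - a' - k * l + Complex.I * h'‖)))
      atTop
      (nhds ((1 / (2 * Real.pi)) *
          Real.log (‖Complex.sin ((Real.pi : ℂ) * (x - a + Complex.I * h) / l)‖) -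
        (1 / (2 * Real.pi)) *
          Real.log (‖Complex.sin ((Real.pi : ℂ) * (x - a' + Complex.I * h') / l)‖))) :=
  symmetric_log_sum_tendsto_log_sin_general l hl a h a' h' x hx hx'
end

section
/- For any w on the unit circle and any function h of the form h(ξ) = ∑_{n≥1} aₙ ξ^{−n} with real coefficients aₙ (absolutely convergent with derivative on an annulus around 𝕋), ∮_𝕋 [conj(h(w)) − conj(h(ξ))]/(w − ξ) dξ − ∮_𝕋 [(h(w) − h(ξ))(conj(w) − conj(ξ))]/(w − ξ)² dξ = 2i ∮_𝕋 Im[conj(h(w) − h(ξ))·(w − ξ)]/(w − ξ)² dξ, and this quantity equals 0. -/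
/-! On the unit circle `conj ξ = ξ⁻¹`, so for real coefficients `conj (h ξ) = g ξ` with
`g ξ = ∑ aₙ ξ^(n+1)`; convergence of the Laurent series at some radius `ρ ∈ (r, 1)` makes `g`
holomorphic on the disc of radius `ρ⁻¹ > 1`. The first integrand is then `dslope g w`, whose
integral vanishes by Cauchy's theorem. The second is `conj ((w ξ)² · dslope g w ξ)`, and since
`conj dξ = -ξ⁻² dξ` on the circle its integral is `-conj (w² ∮ dslope g w) = 0`. Finally
`2i · Im z = z - conj z` expresses the third integrand through the first two. -/

open Complex ComplexConjugate Metric Set Filter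

theorem zpow_neg_natCast_sub_one {K : Type*} [DivisionRing K] (x : K) (n : ℕ) :
    x ^ (-(n : ℤ) - 1) = x⁻¹ ^ (n + 1) := by
  rw [show -(n : ℤ) - 1 = -((n + 1 : ℕ) : ℤ) by push_cast; ring, zpow_neg, zpow_natCast, inv_pow]

theorem HasSum.conj_of_norm_eq_one {a : ℕ → ℝ} {ξ s : ℂ} (hξ : ‖ξ‖ = 1)
    (hs : HasSum (fun n : ℕ => (a n : ℂ) * ξ ^ (-(n : ℤ) - 1)) s) :
    HasSum (fun n : ℕ => (a n : ℂ) * ξ ^ (n + 1)) (conj s) := by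
  convert hasSum_conj'.2 hs using 2 with n
  rw [map_mul, conj_ofReal, zpow_neg_natCast_sub_one, map_pow, map_inv₀, ← inv_eq_conj hξ, inv_inv]

theorem differentiableOn_tsum_mul_pow_succ {c : ℕ → ℂ} {z₀ : ℂ}
    (hz₀ : Summable fun n => c n * z₀ ^ (n + 1)) :
    DifferentiableOn ℂ (fun z => ∑' n, c n * z ^ (n + 1)) (ball 0 ‖z₀‖) :=
  differentiableOn_tsum_of_summable_norm hz₀.norm
    (fun n => ((differentiable_const _).mul (differentiable_pow _)).differentiableOn) isOpen_ball
    fun n z hz => by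
      rw [norm_mul, norm_mul, norm_pow, norm_pow]
      gcongr
      exact (mem_ball_zero_iff.1 hz).le

theorem exists_differentiableOn_eqOn_conj {h : ℂ → ℂ} {a : ℕ → ℝ} {r : ℝ} (hr : r < 1)
    (hrep : ∀ ξ : ℂ, r < ‖ξ‖ → HasSum (fun n : ℕ => (a n : ℂ) * ξ ^ (-(n : ℤ) - 1)) (h ξ)) :
    ∃ R > 1, ∃ g : ℂ → ℂ, DifferentiableOn ℂ g (ball 0 R) ∧
      EqOn (fun ξ => conj (h ξ)) g (sphere 0 1) := by
  obtain ⟨ρ, hρ, hρ1⟩ := exists_between (max_lt hr one_pos)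
  obtain ⟨hrρ, hρ0⟩ := max_lt_iff.1 hρ
  have hsum : Summable fun n => (a n : ℂ) * (ρ : ℂ)⁻¹ ^ (n + 1) := by
    simpa only [zpow_neg_natCast_sub_one] using
      (hrep ρ (by rwa [norm_real, Real.norm_of_nonneg hρ0.le])).summable
  refine ⟨‖(ρ : ℂ)⁻¹‖, ?_, _, differentiableOn_tsum_mul_pow_succ hsum, fun ξ hξ => ?_⟩
  · rw [norm_inv, norm_real, Real.norm_of_nonneg hρ0.le]
    exact (one_lt_inv₀ hρ0).2 hρ1
  · have hξ : ‖ξ‖ = 1 := mem_sphere_zero_iff_norm.1 hξ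
    exact ((hrep ξ (hξ ▸ hr)).conj_of_norm_eq_one hξ).tsum_eq.symm

section Cauchy

variable {E : Type*} [NormedAddCommGroup E] [NormedSpace ℂ E] [CompleteSpace E]

theorem differentiableOn_dslope_of_isOpen {f : ℂ → E} {U : Set ℂ} (hU : IsOpen U)
    (hf : DifferentiableOn ℂ f U) (w : ℂ) : DifferentiableOn ℂ (dslope f w) U := by
  by_cases hw : w ∈ U
  · exact (Complex.differentiableOn_dslope (hU.mem_nhds hw)).2 hf
  · exact (differentiableOn_dslope_of_notMem hw).2 hf

theorem circleIntegral_dslope_eq_zero {f : ℂ → E} {c w : ℂ} {r R : ℝ} (hr : 0 ≤ r) (hrR : r < R)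
    (hf : DifferentiableOn ℂ f (ball c R)) : (∮ z in C(c, r), dslope f w z) = 0 :=
  ((differentiableOn_dslope_of_isOpen isOpen_ball hf w).diffContOnCl_ball
    (closedBall_subset_ball hrR)).circleIntegral_eq_zero hr

end Cauchy

theorem circleIntegral_conj (f : ℂ → ℂ) (c : ℂ) (R : ℝ) :
    (∮ z in C(c, R), conj (f z)) = -conj (∮ z in C(c, R), ((R : ℂ) / (z - c)) ^ 2 * f z) := by
  simp only [circleIntegral, deriv_circleMap, circleMap_sub_center, smul_eq_mul]
  rw [← intervalIntegral.intervalIntegral_conj, ← intervalIntegral.integral_neg]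
  congr 1 with θ
  generalize f (circleMap c R θ) = F
  set z := circleMap 0 R θ
  have hz : conj z * z = (R : ℂ) ^ 2 := by
    rw [conj_mul', norm_circleMap_zero]
    norm_cast
    exact sq_abs R
  rcases eq_or_ne z 0 with hz0 | hz0
  · have hR : (R : ℂ) = 0 := by simpa [hz0] using hz.symm
    simp [hz0, hR]
  · have : conj z ≠ 0 := (map_ne_zero _).2 hz0
    simp only [map_mul, map_div₀, map_pow, conj_ofReal, conj_I]
    field_simp
    linear_combination conj F * hz

theorem circleIntegral_congr_of_eqOn_sphere_diff_singleton {f₁ f₂ : ℂ → ℂ} {c w : ℂ} {R : ℝ}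
    (hR : 0 < R) (h : EqOn f₁ f₂ (sphere c R \ {w})) :
    (∮ z in C(c, R), f₁ z) = ∮ z in C(c, R), f₂ z := by
  refine circleIntegral.circleIntegral_congr_codiscreteWithin ?_ hR.ne'
  filter_upwards [self_mem_codiscreteWithin _, compl_singleton_mem_codiscreteWithin w]
    with z hz hzw using h ⟨abs_of_pos hR ▸ hz, hzw⟩

theorem ofReal_im_conj_mul_div_sq (p d : ℂ) :
    ((conj p * d).im : ℂ) / d ^ 2 = (2 * I)⁻¹ * (conj p / d - p * conj d / d ^ 2) := by
  rw [im_eq_sub_conj, map_mul, conj_conj]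
  rcases eq_or_ne d 0 with rfl | hd
  · simp
  · field_simp

section ConjExtendsInside

variable {h g : ℂ → ℂ} {w : ℂ} {R : ℝ}

theorem eqOn_conj_sub_div_dslope (hgh : EqOn (fun ξ => conj (h ξ)) g (sphere 0 1))
    (hw : w ∈ sphere 0 1) :
    EqOn (fun ξ => (conj (h w) - conj (h ξ)) / (w - ξ)) (dslope g w) (sphere 0 1 \ {w}) := by
  rintro ξ ⟨hξ, hne : ξ ≠ w⟩
  dsimp only
  rw [dslope_of_ne _ hne, slope_def_field, ← hgh hw, ← hgh hξ, ← neg_sub (conj (h ξ)),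
    ← neg_sub ξ, neg_div_neg_eq]

theorem eqOn_mul_conj_sub_div_sq_conj (hgh : EqOn (fun ξ => conj (h ξ)) g (sphere 0 1))
    (hw : w ∈ sphere 0 1) :
    EqOn (fun ξ => (h w - h ξ) * (conj w - conj ξ) / (w - ξ) ^ 2)
      (fun ξ => conj ((w * ξ) ^ 2 * dslope g w ξ)) (sphere 0 1 \ {w}) := by
  intro ξ hξ
  have hdslope := eqOn_conj_sub_div_dslope hgh hw hξ
  dsimp only at hdslope ⊢
  rw [← hdslope]
  obtain ⟨hξ, hne : ξ ≠ w⟩ := hξ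
  rw [mem_sphere_zero_iff_norm] at hw hξ
  have hw0 : w ≠ 0 := norm_pos_iff.1 (hw ▸ one_pos)
  have hξ0 : ξ ≠ 0 := norm_pos_iff.1 (hξ ▸ one_pos)
  simp only [map_mul, map_div₀, map_sub, map_pow, conj_conj, ← inv_eq_conj hw, ← inv_eq_conj hξ]
  field_simp
  ring

theorem circleIntegral_conj_sub_div_eq_zero (hR : 1 < R) (hg : DifferentiableOn ℂ g (ball 0 R))
    (hgh : EqOn (fun ξ => conj (h ξ)) g (sphere 0 1)) (hw : w ∈ sphere 0 1) :
    (∮ ξ in C(0, 1), (conj (h w) - conj (h ξ)) / (w - ξ)) = 0 :=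
  (circleIntegral_congr_of_eqOn_sphere_diff_singleton one_pos
    (eqOn_conj_sub_div_dslope hgh hw)).trans (circleIntegral_dslope_eq_zero zero_le_one hR hg)

theorem circleIntegral_conj_mul_sq_dslope_eq_zero (hR : 1 < R)
    (hg : DifferentiableOn ℂ g (ball 0 R)) (w : ℂ) :
    (∮ ξ in C(0, 1), conj ((w * ξ) ^ 2 * dslope g w ξ)) = 0 := by
  rw [circleIntegral_conj, circleIntegral.integral_congr zero_le_one
    (g := fun ξ => w ^ 2 * dslope g w ξ), circleIntegral.integral_const_mul,
    circleIntegral_dslope_eq_zero zero_le_one hR hg]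
  · simp
  · intro ξ hξ
    have hξ0 : ξ ≠ 0 := ne_zero_of_mem_sphere one_ne_zero ⟨ξ, hξ⟩
    simp only [ofReal_one, sub_zero]
    field_simp

theorem circleIntegral_mul_conj_sub_div_sq_eq_zero (hR : 1 < R)
    (hg : DifferentiableOn ℂ g (ball 0 R)) (hgh : EqOn (fun ξ => conj (h ξ)) g (sphere 0 1))
    (hw : w ∈ sphere 0 1) :
    (∮ ξ in C(0, 1), (h w - h ξ) * (conj w - conj ξ) / (w - ξ) ^ 2) = 0 :=
  (circleIntegral_congr_of_eqOn_sphere_diff_singleton one_pos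
    (eqOn_mul_conj_sub_div_sq_conj hgh hw)).trans
    (circleIntegral_conj_mul_sq_dslope_eq_zero hR hg w)

theorem circleIntegral_im_conj_sub_mul_div_sq_eq_zero (hR : 1 < R)
    (hg : DifferentiableOn ℂ g (ball 0 R)) (hgh : EqOn (fun ξ => conj (h ξ)) g (sphere 0 1))
    (hw : w ∈ sphere 0 1) :
    (∮ ξ in C(0, 1), (((conj (h w - h ξ) * (w - ξ)).im : ℝ) : ℂ) / (w - ξ) ^ 2) = 0 := by
  have hcont : ContinuousOn (dslope g w) (sphere 0 1) :=
    (differentiableOn_dslope_of_isOpen isOpen_ball hg w).continuousOn.mono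
      (sphere_subset_closedBall.trans (closedBall_subset_ball hR))
  rw [circleIntegral_congr_of_eqOn_sphere_diff_singleton one_pos (w := w)
      (f₂ := fun ξ => (2 * I)⁻¹ * (dslope g w ξ - conj ((w * ξ) ^ 2 * dslope g w ξ))),
    circleIntegral.integral_const_mul, circleIntegral.integral_sub,
    circleIntegral_dslope_eq_zero zero_le_one hR hg,
    circleIntegral_conj_mul_sq_dslope_eq_zero hR hg w, sub_zero, mul_zero]
  · exact hcont.circleIntegrable zero_le_one
  · exact (continuous_conj.comp_continuousOn
      ((continuousOn_const.mul continuousOn_id).pow 2 |>.mul hcont)).circleIntegrable zero_le_one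
  · intro ξ hξ
    have hfirst := eqOn_conj_sub_div_dslope hgh hw hξ
    have hsecond := eqOn_mul_conj_sub_div_sq_conj hgh hw hξ
    dsimp only at hfirst hsecond ⊢
    rw [ofReal_im_conj_mul_div_sq, map_sub, hfirst, map_sub, hsecond]

end ConjExtendsInside

theorem circleIntegral_symmetric_kernel_general
    (h : ℂ → ℂ) (a : ℕ → ℝ) (r : ℝ) (hr : r < 1)
    (hrep : ∀ ξ : ℂ, r < ‖ξ‖ →
      HasSum (fun n : ℕ => (a n : ℂ) * ξ ^ (-(n : ℤ) - 1)) (h ξ))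
    (w : ℂ) (hw : ‖w‖ = 1) :
    ((∮ ξ in C(0, 1), (conj (h w) - conj (h ξ)) / (w - ξ)) -
        ∮ ξ in C(0, 1), (h w - h ξ) * (conj w - conj ξ) / (w - ξ) ^ 2) =
      ((2 * Complex.I) *
        ∮ ξ in C(0, 1), (((conj (h w - h ξ) * (w - ξ)).im : ℝ) : ℂ) / (w - ξ) ^ 2) ∧
    ((∮ ξ in C(0, 1), (conj (h w) - conj (h ξ)) / (w - ξ)) -
        ∮ ξ in C(0, 1), (h w - h ξ) * (conj w - conj ξ) / (w - ξ) ^ 2) = 0 := by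
  obtain ⟨R, hR, g, hg, hgh⟩ := exists_differentiableOn_eqOn_conj hr hrep
  replace hw : w ∈ sphere (0 : ℂ) 1 := mem_sphere_zero_iff_norm.2 hw
  rw [circleIntegral_conj_sub_div_eq_zero hR hg hgh hw,
    circleIntegral_mul_conj_sub_div_sq_eq_zero hR hg hgh hw,
    circleIntegral_im_conj_sub_mul_div_sq_eq_zero hR hg hgh hw]
  simp

/-- For `h(ξ) = ∑_{n≥1} aₙ ξ^{−n}` with real coefficients, holomorphic on an annulus
around the unit circle, and `w` on the unit circle, the stated combination of contour
integrals equals `2i ∮ Im[conj(h(w)−h(ξ))(w−ξ)]/(w−ξ)² dξ` and vanishes. -/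
theorem circleIntegral_symmetric_kernel
    (h : ℂ → ℂ) (a : ℕ → ℝ) (r : ℝ) (hr0 : 0 < r) (hr : r < 1)
    (hrep : ∀ ξ : ℂ, r < ‖ξ‖ →
      HasSum (fun n : ℕ => (a n : ℂ) * ξ ^ (-(n : ℤ) - 1)) (h ξ))
    (hdiff : DifferentiableOn ℂ h {ξ : ℂ | r < ‖ξ‖})
    (w : ℂ) (hw : ‖w‖ = 1) :
    ((∮ ξ in C(0, 1), (conj (h w) - conj (h ξ)) / (w - ξ)) -
        ∮ ξ in C(0, 1), (h w - h ξ) * (conj w - conj ξ) / (w - ξ) ^ 2) =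
      ((2 * Complex.I) *
        ∮ ξ in C(0, 1), (((conj (h w - h ξ) * (w - ξ)).im : ℝ) : ℂ) / (w - ξ) ^ 2) ∧
    ((∮ ξ in C(0, 1), (conj (h w) - conj (h ξ)) / (w - ξ)) -
        ∮ ξ in C(0, 1), (h w - h ξ) * (conj w - conj ξ) / (w - ξ) ^ 2) = 0 :=
  circleIntegral_symmetric_kernel_general h a r hr hrep w hw
end
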